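/- Let α be a sentence, ψ and β formulas, and Γ a set of formulas. If Γ ∪ {β} ⊢ ψ, then Γ ∪ {α ∨ β} ⊢ α ∨ ψ. -/

import Mathlib

/-! ## Syntax of a countable predicate language and the logic `⊢` -/

/-- A countable predicate language: countably many constant symbols and
predicate symbols with arities. (Variables are indexed by `ℕ`.) -/
structure PredLanguage where
  Const : Type
  Pred : Type
  arity : Pred → ℕ
  const_countable : Countable Const
  pred_countable : Countable Pred

variable {L : PredLanguage}

/-- Terms: variables (indexed by `ℕ`) and constants. -/
inductive Term (L : PredLanguage) : Type
  | var : ℕ → Term L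
  | const : L.Const → Term L

/-- `t.usesVar x` : the variable `x` occurs in the term `t`. -/
def Term.usesVar (x : ℕ) : Term L → Prop
  | .var y => y = x
  | .const _ => False

/-- `t.usesConst c` : the constant `c` occurs in the term `t`. -/
def Term.usesConst (c : L.Const) : Term L → Prop
  | .var _ => False
  | .const d => d = c

/-- Substitution of the term `t` for the variable `x` in a term. -/
noncomputable def Term.substVar (x : ℕ) (t : Term L) : Term L → Term L
  | .var y => if y = x then t else .var y
  | .const d => .const d

open Classical in
/-- Replacing every occurrence of the constant `c` by the variable `x` in a term. -/
noncomputable def Term.substConst (c : L.Const) (x : ℕ) : Term L → Term L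
  | .var y => .var y
  | .const d => if d = c then .var x else .const d

/-- Formulas of the predicate language `L`: the propositional constant `0̄`, atomic
predicate formulas, the connectives `→` and `&`, and the quantifiers `∀` and `∃`. -/
inductive Formula (L : PredLanguage) : Type
  | bot : Formula L
  | pred : (P : L.Pred) → (Fin (L.arity P) → Term L) → Formula L
  | imp : Formula L → Formula L → Formula L
  | conj : Formula L → Formula L → Formula L
  | all : ℕ → Formula L → Formula L
  | ex : ℕ → Formula L → Formula L

namespace Formula

/-- `1̄ := 0̄ → 0̄`. -/
def one : Formula L := .imp .bot .bot

/-- `φ ∧ ψ := φ & (φ → ψ)`. -/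
def and (φ ψ : Formula L) : Formula L := .conj φ (.imp φ ψ)

/-- `φ ∨ ψ := ((φ→ψ)→ψ) ∧ ((ψ→φ)→φ)`. -/
def or (φ ψ : Formula L) : Formula L := and (.imp (.imp φ ψ) ψ) (.imp (.imp ψ φ) φ)

/-- `φⁿ`, the `n`-fold `&`-power of `φ`, with `φ⁰ = 1̄`. -/
def pow (φ : Formula L) : ℕ → Formula L
  | 0 => one
  | n + 1 => .conj φ (φ.pow n)

/-- `φ.freeIn x` : the variable `x` occurs free in `φ`. -/
def freeIn (x : ℕ) : Formula L → Prop
  | .bot => False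
  | .pred _ ts => ∃ i, (ts i).usesVar x
  | .imp φ ψ => φ.freeIn x ∨ ψ.freeIn x
  | .conj φ ψ => φ.freeIn x ∨ ψ.freeIn x
  | .all y φ => y ≠ x ∧ φ.freeIn x
  | .ex y φ => y ≠ x ∧ φ.freeIn x

/-- `φ.usesConst c` : the constant `c` occurs in `φ`. -/
def usesConst (c : L.Const) : Formula L → Prop
  | .bot => False
  | .pred _ ts => ∃ i, (ts i).usesConst c
  | .imp φ ψ => φ.usesConst c ∨ ψ.usesConst c
  | .conj φ ψ => φ.usesConst c ∨ ψ.usesConst c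
  | .all _ φ => φ.usesConst c
  | .ex _ φ => φ.usesConst c

/-- A sentence is a formula with no free variables. -/
def IsSentence (φ : Formula L) : Prop := ∀ x, ¬ φ.freeIn x

/-- `φ.substVar x t` : the result of substituting `t` for the free occurrences of `x` in `φ`. -/
noncomputable def substVar (x : ℕ) (t : Term L) : Formula L → Formula L
  | .bot => .bot
  | .pred P ts => .pred P fun i => (ts i).substVar x t
  | .imp φ ψ => .imp (φ.substVar x t) (ψ.substVar x t)
  | .conj φ ψ => .conj (φ.substVar x t) (ψ.substVar x t)
  | .all y φ => if y = x then .all y φ else .all y (φ.substVar x t)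
  | .ex y φ => if y = x then .ex y φ else .ex y (φ.substVar x t)

/-- `φ.substConst c x` : the result of replacing every occurrence of the constant `c`
by the variable `x` in `φ`. -/
noncomputable def substConst (c : L.Const) (x : ℕ) : Formula L → Formula L
  | .bot => .bot
  | .pred P ts => .pred P fun i => (ts i).substConst c x
  | .imp φ ψ => .imp (φ.substConst c x) (ψ.substConst c x)
  | .conj φ ψ => .conj (φ.substConst c x) (ψ.substConst c x)
  | .all y φ => .all y (φ.substConst c x)
  | .ex y φ => .ex y (φ.substConst c x)

/-- `Substitutable x t φ` : the term `t` is substitutable for the variable `x` in `φ`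
(no free occurrence of `x` lies in the scope of a quantifier binding a variable of `t`). -/
def Substitutable (x : ℕ) (t : Term L) : Formula L → Prop
  | .bot => True
  | .pred _ _ => True
  | .imp φ ψ => Substitutable x t φ ∧ Substitutable x t ψ
  | .conj φ ψ => Substitutable x t φ ∧ Substitutable x t ψ
  | .all y φ => ¬ (Formula.all y φ).freeIn x ∨ (¬ t.usesVar y ∧ Substitutable x t φ)
  | .ex y φ => ¬ (Formula.ex y φ).freeIn x ∨ (¬ t.usesVar y ∧ Substitutable x t φ)

end Formula

/-- The axiom schemata of the logic: Hájek's (A1)–(A8), the first-order schemata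
(∀1), (∃1), (∀2), (∃2), (Lin), and the schema (RC). -/
inductive IsAxiom : Formula L → Prop
  | a1 (φ ψ χ : Formula L) : IsAxiom (.imp (.imp φ ψ) (.imp (.imp ψ χ) (.imp φ χ)))
  | a2 (φ ψ : Formula L) : IsAxiom (.imp (.conj φ ψ) φ)
  | a3 (φ ψ : Formula L) : IsAxiom (.imp (.conj φ ψ) (.conj ψ φ))
  | a4 (φ ψ : Formula L) : IsAxiom (.imp (.conj φ (.imp φ ψ)) (.conj ψ (.imp ψ φ)))
  | a5 (φ ψ χ : Formula L) : IsAxiom (.imp (.imp φ (.imp ψ χ)) (.imp (.conj φ ψ) χ))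
  | a6 (φ ψ χ : Formula L) : IsAxiom (.imp (.imp (.conj φ ψ) χ) (.imp φ (.imp ψ χ)))
  | a7 (φ ψ χ : Formula L) :
      IsAxiom (.imp (.imp (.imp φ ψ) χ) (.imp (.imp (.imp ψ φ) χ) χ))
  | a8 (φ : Formula L) : IsAxiom (.imp .bot φ)
  | all1 (φ : Formula L) (x : ℕ) (t : Term L) (h : Formula.Substitutable x t φ) :
      IsAxiom (.imp (.all x φ) (φ.substVar x t))
  | ex1 (φ : Formula L) (x : ℕ) (t : Term L) (h : Formula.Substitutable x t φ) :
      IsAxiom (.imp (φ.substVar x t) (.ex x φ))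
  | all2 (φ ψ : Formula L) (x : ℕ) (h : ¬ φ.freeIn x) :
      IsAxiom (.imp (.all x (.imp φ ψ)) (.imp φ (.all x ψ)))
  | ex2 (φ ψ : Formula L) (x : ℕ) (h : ¬ φ.freeIn x) :
      IsAxiom (.imp (.all x (.imp ψ φ)) (.imp (.ex x ψ) φ))
  | lin (φ ψ : Formula L) (x : ℕ) (h : ¬ φ.freeIn x) :
      IsAxiom (.imp (.all x (ψ.or φ)) ((Formula.all x ψ).or φ))
  | rc (χ : Formula L) (x : ℕ) :
      IsAxiom (.imp (.all x (.conj χ χ)) (.conj (.all x χ) (.all x χ)))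

/-- `Deriv Γ φ` (written `Γ ⊢ φ`): `φ` has a (possibly infinite, well-founded,
i.e. ordinal-indexed) proof from `Γ` using the axioms, Modus Ponens, Generalization,
and the infinitary rule (Inf) for sentences `φ, α, β`. -/
inductive Deriv (Γ : Set (Formula L)) : Formula L → Prop
  | ax {φ : Formula L} : IsAxiom φ → Deriv Γ φ
  | hyp {φ : Formula L} : φ ∈ Γ → Deriv Γ φ
  | mp {φ ψ : Formula L} : Deriv Γ φ → Deriv Γ (.imp φ ψ) → Deriv Γ ψ
  | gen {φ : Formula L} {x : ℕ} : Deriv Γ φ → Deriv Γ (.all x φ)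
  | inf {φ α β : Formula L} : φ.IsSentence → α.IsSentence → β.IsSentence →
      (∀ n : ℕ, Deriv Γ (φ.or (.imp α (β.pow n)))) →
      Deriv Γ (φ.or (.imp α (.conj α β)))

namespace Deriv

variable {Γ : Set (Formula L)} {a b c p q : Formula L}

theorem imp_trans (hab : Deriv Γ (a.imp b)) (hbc : Deriv Γ (b.imp c)) : Deriv Γ (a.imp c) :=
  hbc.mp (hab.mp (.ax (.a1 a b c)))

theorem curry (h : Deriv Γ ((Formula.conj a b).imp c)) : Deriv Γ (a.imp (b.imp c)) :=
  h.mp (.ax (.a6 a b c))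

theorem imp_intro : Deriv Γ (a.imp (b.imp a)) :=
  curry (.ax (.a2 a b))

theorem imp_self : Deriv Γ (a.imp a) :=
  (Deriv.ax (.a8 .bot)).mp (curry (imp_trans (.ax (.a3 _ a)) (.ax (.a2 a _))))

theorem imp_swap (h : Deriv Γ (a.imp (b.imp c))) : Deriv Γ (b.imp (a.imp c)) :=
  curry (imp_trans (.ax (.a3 b a)) (h.mp (.ax (.a5 a b c))))

theorem imp_mono_right (h : Deriv Γ (b.imp c)) : Deriv Γ ((a.imp b).imp (a.imp c)) :=
  h.mp (imp_swap (.ax (.a1 a b c)))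

theorem conj_mp : Deriv Γ ((Formula.conj a (a.imp b)).imp b) :=
  imp_trans (.ax (.a4 a b)) (.ax (.a2 b (b.imp a)))

theorem modus_ponens : Deriv Γ (a.imp ((a.imp b).imp b)) :=
  curry conj_mp

theorem conj_intro : Deriv Γ (a.imp (b.imp (Formula.conj a b))) :=
  curry imp_self

/-- Prelinearity (A7) reduces this to the two cases `a → b` and `b → a`; in each, (A4) rewrites
`a & (a → b)` as `b & (b → a)`. -/
theorem imp_and (hca : Deriv Γ (c.imp a)) (hcb : Deriv Γ (c.imp b)) :
    Deriv Γ (c.imp (a.and b)) := by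
  have case_ab : Deriv Γ ((a.imp b).imp (c.imp (a.and b))) :=
    imp_swap (imp_trans hca conj_intro)
  have case_ba : Deriv Γ ((b.imp a).imp (c.imp (a.and b))) :=
    imp_trans (imp_swap (curry (.ax (.a4 b a)))) (hcb.mp (.ax (.a1 c b _)))
  exact case_ba.mp (case_ab.mp (.ax (.a7 a b _)))

theorem or_intro_left : Deriv Γ (a.imp (a.or b)) :=
  imp_and modus_ponens imp_intro

theorem or_intro_right : Deriv Γ (b.imp (a.or b)) :=
  imp_and imp_intro modus_ponens

theorem or_elim (hac : Deriv Γ (a.imp c)) (hbc : Deriv Γ (b.imp c)) :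
    Deriv Γ ((a.or b).imp c) := by
  have left : Deriv Γ ((a.or b).imp ((a.imp b).imp b)) := .ax (.a2 _ _)
  have right : Deriv Γ ((a.or b).imp ((b.imp a).imp a)) := conj_mp
  have case_ab : Deriv Γ ((a.imp b).imp ((a.or b).imp c)) :=
    imp_trans (imp_swap left) (imp_mono_right hbc)
  have case_ba : Deriv Γ ((b.imp a).imp ((a.or b).imp c)) :=
    imp_trans (imp_swap right) (imp_mono_right hac)
  exact case_ba.mp (case_ab.mp (.ax (.a7 a b _)))

theorem or_comm (h : Deriv Γ (a.or b)) : Deriv Γ (b.or a) :=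
  h.mp (.ax (.a4 _ _))

theorem or_mp (hp : Deriv Γ (a.or p)) (hpq : Deriv Γ (a.or (p.imp q))) : Deriv Γ (a.or q) := by
  have from_a : Deriv Γ (a.imp ((a.or p).imp (a.or q))) := imp_trans or_intro_left imp_intro
  have from_pq : Deriv Γ ((p.imp q).imp ((a.or p).imp (a.or q))) :=
    imp_swap (or_elim (imp_trans or_intro_left imp_intro)
      (imp_trans modus_ponens (imp_mono_right or_intro_right)))
  exact hp.mp (hpq.mp (or_elim from_a from_pq))

theorem or_assoc_mp : Deriv Γ ((a.or (b.or c)).imp ((a.or b).or c)) :=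
  or_elim (imp_trans or_intro_left or_intro_left)
    (or_elim (imp_trans or_intro_right or_intro_left) or_intro_right)

theorem or_assoc_mpr : Deriv Γ (((a.or b).or c).imp (a.or (b.or c))) :=
  or_elim (or_elim or_intro_left (imp_trans or_intro_left or_intro_right))
    (imp_trans or_intro_right or_intro_right)

end Deriv

theorem Formula.IsSentence.or {a b : Formula L} (ha : a.IsSentence) (hb : b.IsSentence) :
    (a.or b).IsSentence := fun x => by
  simp only [Formula.or, Formula.and, Formula.freeIn]
  have := ha x
  have := hb x
  tauto

/-- Generalization goes through because (Lin) lets `∀x` pass the sentence `α`, and (Inf) because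
`α ∨ φ` is again a sentence, with `∨` reassociated on both sides. -/
theorem Deriv.or_of_forall_or {Γ Δ : Set (Formula L)} {α ψ : Formula L} (hα : α.IsSentence)
    (hΔ : ∀ γ ∈ Δ, Deriv Γ (α.or γ)) (h : Deriv Δ ψ) : Deriv Γ (α.or ψ) := by
  induction h with
  | ax hax => exact (Deriv.ax hax).mp or_intro_right
  | hyp hγ => exact hΔ _ hγ
  | mp _ _ ih_p ih_pq => exact or_mp ih_p ih_pq
  | @gen φ x _ ih => exact or_comm ((Deriv.gen (or_comm ih)).mp (.ax (.lin α φ x (hα x))))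
  | @inf φ α' β' hφ hα' hβ' _ ih =>
    exact (Deriv.inf (hα.or hφ) hα' hβ' fun n => (ih n).mp or_assoc_mp).mp or_assoc_mpr

/-- if `α` is a sentence and `Γ ∪ {β} ⊢ ψ`, then `Γ ∪ {α ∨ β} ⊢ α ∨ ψ`. -/
theorem weak_disjunction (L : PredLanguage) (Γ : Set (Formula L)) (α ψ β : Formula L)
    (hα : α.IsSentence) (h : Deriv (Γ ∪ {β}) ψ) :
    Deriv (Γ ∪ {α.or β}) (α.or ψ) := by
  refine Deriv.or_of_forall_or hα (fun γ hγ => ?_) h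
  rcases hγ with hγΓ | rfl
  · exact (Deriv.hyp (Or.inl hγΓ)).mp Deriv.or_intro_right
  · exact Deriv.hyp (Or.inr rfl)
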